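/- For the map φ(x_0, ..., x_{2k}) = (x_1, ..., x_{2k}, (x_1 x_{2k} + a(x_{k+1} + x_k))/x_0), the logarithmic volume form ω = (x_0 x_1 ⋯ x_{2k})^{-1} dx_0 ∧ dx_1 ∧ ⋯ ∧ dx_{2k} is anti-invariant: φ*ω = -ω; equivalently, the Jacobian determinant of φ at (x_0, ..., x_{2k}) equals -(x_1 x_2 ⋯ x_{2k} x_{2k+1}')/(x_0 x_1 ⋯ x_{2k}), where x_{2k+1}' = (x_1 x_{2k} + a(x_{k+1} + x_k))/x_0 is the last component of φ. -/

import Mathlib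

/-- The Heideman–Hogan map `φ` on `(2k+1)`-tuples of reals (with `k+1` in place
of `k`, so that `k+1` ranges over all positive integers). -/
noncomputable def hhPhiR (k : ℕ) (a : ℝ) (x : Fin (2 * (k + 1) + 1) → ℝ) : Fin (2 * (k + 1) + 1) → ℝ :=
  fun i => if h : (i : ℕ) < 2 * (k + 1) then x ⟨i + 1, by omega⟩
    else (x ⟨1, by omega⟩ * x ⟨2 * (k + 1), by omega⟩
        + a * (x ⟨(k + 1) + 1, by omega⟩ + x ⟨k + 1, by omega⟩)) / x ⟨0, by omega⟩

namespace HHaux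

variable (k : ℕ) (a : ℝ)

/-- the last-component function -/
noncomputable def g (z : Fin (2 * (k + 1) + 1) → ℝ) : ℝ :=
  (z ⟨1, by omega⟩ * z ⟨2 * (k + 1), by omega⟩
      + a * (z ⟨(k + 1) + 1, by omega⟩ + z ⟨k + 1, by omega⟩)) / z ⟨0, by omega⟩

/-- coordinate projections -/
noncomputable def P (i : Fin (2 * (k + 1) + 1)) : (Fin (2 * (k + 1) + 1) → ℝ) →L[ℝ] ℝ :=
  ContinuousLinearMap.proj i

/-- the derivative of `g` at `x` -/
noncomputable def L (x : Fin (2 * (k + 1) + 1) → ℝ) : (Fin (2 * (k + 1) + 1) → ℝ) →L[ℝ] ℝ :=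
  (x ⟨1, by omega⟩ * x ⟨2 * (k + 1), by omega⟩
      + a * (x ⟨(k + 1) + 1, by omega⟩ + x ⟨k + 1, by omega⟩))
    • ((-(x ⟨0, by omega⟩ ^ 2)⁻¹) • P k ⟨0, by omega⟩)
  + (x ⟨0, by omega⟩)⁻¹ • (x ⟨1, by omega⟩ • P k ⟨2 * (k + 1), by omega⟩
      + x ⟨2 * (k + 1), by omega⟩ • P k ⟨1, by omega⟩
      + a • (P k ⟨(k + 1) + 1, by omega⟩ + P k ⟨k + 1, by omega⟩))

theorem hasFDerivAt_g (x : Fin (2 * (k + 1) + 1) → ℝ) (hx0 : x ⟨0, by omega⟩ ≠ 0) :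
    HasFDerivAt (g k a) (L k a x) x := by
  have hp : ∀ i, HasFDerivAt (fun z : Fin (2 * (k + 1) + 1) → ℝ => z i) (P k i) x :=
    fun i => (P k i).hasFDerivAt
  have hnum : HasFDerivAt (fun z : Fin (2 * (k + 1) + 1) → ℝ =>
      z ⟨1, by omega⟩ * z ⟨2 * (k + 1), by omega⟩
        + a * (z ⟨(k + 1) + 1, by omega⟩ + z ⟨k + 1, by omega⟩))
      (x ⟨1, by omega⟩ • P k ⟨2 * (k + 1), by omega⟩
        + x ⟨2 * (k + 1), by omega⟩ • P k ⟨1, by omega⟩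
        + a • (P k ⟨(k + 1) + 1, by omega⟩ + P k ⟨k + 1, by omega⟩)) x :=
    ((hp _).mul (hp _)).add (((hp _).add (hp _)).const_mul a)
  have hinv : HasFDerivAt (fun z : Fin (2 * (k + 1) + 1) → ℝ => (z ⟨0, by omega⟩)⁻¹)
      ((-(x ⟨0, by omega⟩ ^ 2)⁻¹) • P k ⟨0, by omega⟩) x :=
    (hasDerivAt_inv hx0).comp_hasFDerivAt x (hp _)
  have hgeq : g k a = fun z : Fin (2 * (k + 1) + 1) → ℝ =>
      (z ⟨1, by omega⟩ * z ⟨2 * (k + 1), by omega⟩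
        + a * (z ⟨(k + 1) + 1, by omega⟩ + z ⟨k + 1, by omega⟩)) * (z ⟨0, by omega⟩)⁻¹ := by
    funext z; exact div_eq_mul_inv _ _
  rw [hgeq, L]
  exact hnum.mul hinv

theorem L_single0 (x : Fin (2 * (k + 1) + 1) → ℝ) :
    L k a x (fun j' => if j' = (⟨0, by omega⟩ : Fin (2 * (k + 1) + 1)) then 1 else 0)
      = -(x ⟨1, by omega⟩ * x ⟨2 * (k + 1), by omega⟩
          + a * (x ⟨(k + 1) + 1, by omega⟩ + x ⟨k + 1, by omega⟩)) / x ⟨0, by omega⟩ ^ 2 := by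
  have h1 : (⟨1, by omega⟩ : Fin (2 * (k + 1) + 1)) ≠ ⟨0, by omega⟩ := by
    simp [Fin.ext_iff]
  have h2 : (⟨2 * (k + 1), by omega⟩ : Fin (2 * (k + 1) + 1)) ≠ ⟨0, by omega⟩ := by
    simp [Fin.ext_iff]
  have h3 : (⟨(k + 1) + 1, by omega⟩ : Fin (2 * (k + 1) + 1)) ≠ ⟨0, by omega⟩ := by
    simp [Fin.ext_iff]
  have h4 : (⟨k + 1, by omega⟩ : Fin (2 * (k + 1) + 1)) ≠ ⟨0, by omega⟩ := by
    simp [Fin.ext_iff]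
  simp only [L, ContinuousLinearMap.add_apply, ContinuousLinearMap.smul_apply, P,
    ContinuousLinearMap.proj_apply, if_pos rfl, if_neg h1, if_neg h2, if_neg h3, if_neg h4]
  norm_num
  ring

end HHaux

/-- Anti-invariance of the logarithmic volume form: the Jacobian determinant of
`φ` times the product of the source coordinates, divided by the product of the
image coordinates, equals `-1`. -/
theorem hhPhi_antiinvariant_volume (k : ℕ) (a : ℝ)
    (x : Fin (2 * (k + 1) + 1) → ℝ) (hx : ∀ i, x i ≠ 0)
    (hy : ∀ i, hhPhiR k a x i ≠ 0) :
    LinearMap.det ((fderiv ℝ (hhPhiR k a) x).toLinearMap)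
      * (∏ i, x i) / (∏ i, hhPhiR k a x i) = -1 := by
  classical
  have hx0 : x ⟨0, by omega⟩ ≠ 0 := hx _
  have hg := HHaux.hasFDerivAt_g k a x hx0
  -- components
  have hPhi : hhPhiR k a = fun z (i : Fin (2 * (k + 1) + 1)) =>
      if h : (i : ℕ) < 2 * (k + 1) then z ⟨i + 1, by omega⟩ else HHaux.g k a z := rfl
  have hdiff : ∀ i : Fin (2 * (k + 1) + 1), DifferentiableAt ℝ
      (fun z : Fin (2 * (k + 1) + 1) → ℝ =>
        if h : (i : ℕ) < 2 * (k + 1) then z ⟨i + 1, by omega⟩ else HHaux.g k a z) x := by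
    intro i
    by_cases h : (i : ℕ) < 2 * (k + 1)
    · simp only [dif_pos h]
      exact (ContinuousLinearMap.proj (R := ℝ)
        (φ := fun _ : Fin (2 * (k + 1) + 1) => ℝ) ⟨(i : ℕ) + 1, by omega⟩).differentiableAt
    · simp only [dif_neg h]
      exact hg.differentiableAt
  have hD : fderiv ℝ (hhPhiR k a) x = ContinuousLinearMap.pi fun i : Fin (2 * (k + 1) + 1) =>
      fderiv ℝ (fun z : Fin (2 * (k + 1) + 1) → ℝ =>
        if h : (i : ℕ) < 2 * (k + 1) then z ⟨i + 1, by omega⟩ else HHaux.g k a z) x := by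
    rw [hPhi]; exact fderiv_pi hdiff
  set M : Matrix (Fin (2 * (k + 1) + 1)) (Fin (2 * (k + 1) + 1)) ℝ :=
    LinearMap.toMatrix' (fderiv ℝ (hhPhiR k a) x).toLinearMap with hM
  have hMapp : ∀ i j : Fin (2 * (k + 1) + 1), M i j =
      fderiv ℝ (fun z : Fin (2 * (k + 1) + 1) → ℝ =>
        if h : (i : ℕ) < 2 * (k + 1) then z ⟨i + 1, by omega⟩ else HHaux.g k a z) x
        (fun j' => if j' = j then 1 else 0) := by
    intro i j
    rw [hM, LinearMap.toMatrix'_apply]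
    simp [hD, ContinuousLinearMap.pi_apply]
    congr 1; funext j'; simp [Pi.single_apply]
  have hM1 : ∀ i j : Fin (2 * (k + 1) + 1), (i : ℕ) < 2 * (k + 1) →
      M i j = if (i : ℕ) + 1 = (j : ℕ) then 1 else 0 := by
    intro i j h
    rw [hMapp]
    simp only [dif_pos h]
    have hproj : fderiv ℝ (fun z : Fin (2 * (k + 1) + 1) → ℝ => z ⟨(i : ℕ) + 1, by omega⟩) x
        = ContinuousLinearMap.proj (R := ℝ)
          (φ := fun _ : Fin (2 * (k + 1) + 1) => ℝ) ⟨(i : ℕ) + 1, by omega⟩ :=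
      (ContinuousLinearMap.proj (R := ℝ)
        (φ := fun _ : Fin (2 * (k + 1) + 1) => ℝ) ⟨(i : ℕ) + 1, by omega⟩).fderiv
    rw [hproj]
    simp [ContinuousLinearMap.proj_apply, Fin.ext_iff, eq_comm]
  have hMlast : M (Fin.last (2 * (k + 1))) ⟨0, by omega⟩
      = -(x ⟨1, by omega⟩ * x ⟨2 * (k + 1), by omega⟩
          + a * (x ⟨(k + 1) + 1, by omega⟩ + x ⟨k + 1, by omega⟩)) / x ⟨0, by omega⟩ ^ 2 := by
    rw [hMapp]
    have hnl : ¬ ((Fin.last (2 * (k + 1)) : ℕ) < 2 * (k + 1)) := by simp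
    have hfun : (fun z : Fin (2 * (k + 1) + 1) → ℝ =>
        if h : ((Fin.last (2 * (k + 1)) : Fin (2 * (k + 1) + 1)) : ℕ) < 2 * (k + 1)
          then z ⟨((Fin.last (2 * (k + 1)) : Fin (2 * (k + 1) + 1)) : ℕ) + 1, by omega⟩
          else HHaux.g k a z) = HHaux.g k a := by
      funext z; rw [dif_neg hnl]
    rw [hfun, hg.fderiv]
    exact HHaux.L_single0 k a x
  have hdet : LinearMap.det ((fderiv ℝ (hhPhiR k a) x).toLinearMap)
      = -(x ⟨1, by omega⟩ * x ⟨2 * (k + 1), by omega⟩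
          + a * (x ⟨(k + 1) + 1, by omega⟩ + x ⟨k + 1, by omega⟩)) / x ⟨0, by omega⟩ ^ 2 := by
    rw [← LinearMap.det_toMatrix', ← hM]
    rw [Matrix.det_succ_column_zero]
    rw [Finset.sum_eq_single_of_mem (Fin.last (2 * (k + 1))) (Finset.mem_univ _)]
    · have hminor : M.submatrix (Fin.last (2 * (k + 1))).succAbove Fin.succ = 1 := by
        ext p q
        rw [Matrix.submatrix_apply, Fin.succAbove_last]
        rw [hM1 _ _ (by simpa using p.isLt)]
        simp [Matrix.one_apply, Fin.ext_iff]
      have h0 : (0 : Fin (2 * (k + 1) + 1)) = ⟨0, by omega⟩ := rfl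
      rw [hminor, Matrix.det_one, h0, hMlast]
      have hev : (-1 : ℝ) ^ ((Fin.last (2 * (k + 1)) : Fin (2 * (k + 1) + 1)) : ℕ) = 1 := by
        rw [Fin.val_last]
        exact Even.neg_one_pow ⟨k + 1, by ring⟩
      rw [hev]; ring
    · intro i _ hne
      have hlt : (i : ℕ) < 2 * (k + 1) := by
        have h1 := i.isLt
        rcases Nat.lt_or_ge (i : ℕ) (2 * (k + 1)) with h | h
        · exact h
        · exact absurd (Fin.ext (by omega : (i : ℕ) = 2 * (k + 1))) hne
      rw [hM1 _ _ hlt]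
      simp
  -- the products
  have hyN : hhPhiR k a x (Fin.last (2 * (k + 1))) = HHaux.g k a x := by
    have hnl : ¬ ((Fin.last (2 * (k + 1)) : ℕ) < 2 * (k + 1)) := by simp
    rw [hhPhiR, dif_neg hnl]
    rfl
  have hycast : ∀ i : Fin (2 * (k + 1)), hhPhiR k a x i.castSucc = x i.succ := by
    intro i
    have h : ((i.castSucc : Fin (2 * (k + 1) + 1)) : ℕ) < 2 * (k + 1) := by simpa using i.isLt
    rw [hhPhiR, dif_pos h]
    exact congrArg x (Fin.ext (by simp))
  have hprodx : (∏ i, x i) = x ⟨0, by omega⟩ * ∏ i : Fin (2 * (k + 1)), x i.succ := by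
    rw [Fin.prod_univ_succ]
    congr 1
  have hprody : (∏ i, hhPhiR k a x i)
      = (∏ i : Fin (2 * (k + 1)), x i.succ) * HHaux.g k a x := by
    rw [Fin.prod_univ_castSucc, hyN]
    congr 1
    exact Finset.prod_congr rfl fun i _ => hycast i
  have hglast : HHaux.g k a x ≠ 0 := by rw [← hyN]; exact hy _
  have hgx : x ⟨1, by omega⟩ * x ⟨2 * (k + 1), by omega⟩
      + a * (x ⟨(k + 1) + 1, by omega⟩ + x ⟨k + 1, by omega⟩)
      = HHaux.g k a x * x ⟨0, by omega⟩ := by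
    rw [HHaux.g]; exact (div_mul_cancel₀ _ hx0).symm
  have hprodne : (∏ i : Fin (2 * (k + 1)), x i.succ) ≠ 0 :=
    Finset.prod_ne_zero_iff.mpr fun i _ => hx _
  have hx0' : x 0 ≠ 0 := hx 0
  rw [hdet, hprodx, hprody, hgx]
  have h00 : (⟨0, by omega⟩ : Fin (2 * (k + 1) + 1)) = 0 := rfl
  rw [h00] at hx0 ⊢
  field_simp
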